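/- arXiv:1001.4777 — 5 statements merged into one kernel-verified Lean document; each statement's English description precedes it below -/
import Mathlib

section
/- Let A be a Dedekind domain, let H be a commutative Hopf algebra over A that is flat as an A-module, and let V be a flat A-module equipped with a right H-comodule structure, i.e. an A-linear map ρ : V → V ⊗[A] H that is counital ((id_V ⊗ counit) ∘ ρ equals the canonical isomorphism V ≅ V ⊗[A] A followed by identity) and coassociative ((ρ ⊗ id_H) ∘ ρ = (id_V ⊗ comul) ∘ ρ after the canonical identification (V ⊗ H) ⊗ H ≅ V ⊗ (H ⊗ H)). Then every finitely generated A-submodule W₀ of V is contained in an A-submodule U of V such that U is finitely generated and projective over A, and U is a subcomodule of V, i.e. ρ maps U into the image of the canonical map U ⊗[A] H → V ⊗[A] H induced by the inclusion U ⊆ V. -/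
/-!
Enlarge the finitely generated `W₀` to a finitely generated `L` with `ρ W₀ ⊆ L ⊗ H` and take
`U = {v ∈ L | ρ v ∈ L ⊗ H}`, which contains `W₀` and is finitely generated as `A` is Noetherian.
If `u ∈ U` and `ρ u = y ∈ L ⊗ H`, coassociativity shows that `y` is killed by `g ⊗ H`, where
`g : L → (V ⊗ H) ⧸ (L ⊗ H)` is induced by `ρ`; since `H` is flat, `ker (g ⊗ H) = ker g ⊗ H = U ⊗ H`,
so `U` is a subcomodule. Finally `U` is torsion-free, hence flat over the Dedekind domain `A`, and
finitely presented, hence projective.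
-/

open TensorProduct LinearMap

section

variable {R V : Type*} [CommRing R] [AddCommGroup V] [Module R V]

theorem Submodule.projective_of_fg [IsDedekindDomain R] [Module.Flat R V] {U : Submodule R V}
    (hU : U.FG) : Module.Projective R U :=
  have : Module.Finite R U := Module.Finite.iff_fg.mpr hU
  have : Module.FinitePresentation R U := Module.finitePresentation_of_finite R U
  Module.Flat.projective_of_finitePresentation

variable {M : Type*} [AddCommGroup M] [Module R M] (C : Type*) [AddCommGroup C] [Module R C]

theorem range_rTensor_le_range_rTensor_subtype {f : M →ₗ[R] V} {U : Submodule R V}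
    (h : range f ≤ U) : range (f.rTensor C) ≤ range (U.subtype.rTensor C) := by
  rw [show f = U.subtype ∘ₗ f.codRestrict U (fun m ↦ h ⟨m, rfl⟩) from rfl, rTensor_comp]
  exact range_comp_le_range _ _

variable {C}

theorem Submodule.exists_fg_le_and_map_le_range_rTensor (ρ : V →ₗ[R] V ⊗[R] C)
    {W : Submodule R V} (hW : W.FG) :
    ∃ L : Submodule R V, L.FG ∧ W ≤ L ∧ W.map ρ ≤ range (L.subtype.rTensor C) := by
  obtain ⟨s, rfl⟩ := hW
  obtain ⟨P, hP, hsP⟩ :=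
    exists_finite_submodule_left_of_setFinite (ρ '' s) (s.finite_toSet.image ρ)
  refine ⟨span R s ⊔ P, (Submodule.fg_span s.finite_toSet).sup (Module.Finite.iff_fg.mp hP),
    le_sup_left, ?_⟩
  rw [Submodule.map_span, Submodule.span_le]
  exact hsP.trans (range_rTensor_le_range_rTensor_subtype C (by simp))

def Submodule.IsSubcomodule (ρ : V →ₗ[R] V ⊗[R] C) (U : Submodule R V) : Prop :=
  ∀ u ∈ U, ρ u ∈ range (U.subtype.rTensor C)

def Submodule.comoduleInterior (ρ : V →ₗ[R] V ⊗[R] C) (L : Submodule R V) : Submodule R V :=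
  L ⊓ (range (L.subtype.rTensor C)).comap ρ

variable [Coalgebra R C] {ρ : V →ₗ[R] V ⊗[R] C}

theorem rTensor_apply_eq_of_coassoc
    (hcoassoc : (TensorProduct.assoc R V C C).toLinearMap ∘ₗ ρ.rTensor C ∘ₗ ρ =
      Coalgebra.comul.lTensor V ∘ₗ ρ) {f : M →ₗ[R] V} {v : V} {y : M ⊗[R] C}
    (hy : f.rTensor C y = ρ v) :
    ρ.rTensor C (ρ v) =
      (f.rTensor C).rTensor C
        ((TensorProduct.assoc R M C C).symm (Coalgebra.comul.lTensor M y)) := by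
  have hv := congr($hcoassoc v)
  simp only [comp_apply, LinearEquiv.coe_coe] at hv
  rw [← (TensorProduct.assoc R V C C).symm_apply_apply (ρ.rTensor C (ρ v)), hv, ← hy,
    ← comp_apply (Coalgebra.comul.lTensor V), lTensor_comp_rTensor, ← rTensor_comp_lTensor,
    rTensor_tensor]
  simp

theorem Submodule.isSubcomodule_comoduleInterior [Module.Flat R C]
    (hcoassoc : (TensorProduct.assoc R V C C).toLinearMap ∘ₗ ρ.rTensor C ∘ₗ ρ =
      Coalgebra.comul.lTensor V ∘ₗ ρ) (L : Submodule R V) :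
    (L.comoduleInterior ρ).IsSubcomodule ρ := by
  set N := range (L.subtype.rTensor C)
  set g := N.mkQ ∘ₗ ρ ∘ₗ L.subtype
  rintro u ⟨-, y, hy⟩
  have hgy : g.rTensor C y = 0 := by
    rw [rTensor_comp_apply, rTensor_comp_apply, hy, rTensor_apply_eq_of_coassoc hcoassoc hy,
      ← rTensor_comp_apply, range_mkQ_comp, rTensor_zero, LinearMap.zero_apply]
  obtain ⟨x, rfl⟩ := (Module.Flat.rTensor_exact C g.exact_subtype_ker_map y).mp hgy
  rw [← hy, ← rTensor_comp_apply]
  refine range_rTensor_le_range_rTensor_subtype C ?_ ⟨x, rfl⟩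
  rintro _ ⟨⟨l, hl⟩, rfl⟩
  exact ⟨l.2, by simpa [g, N] using hl⟩

end

theorem flat_comodule_union_of_fg_projective_subcomodules_general
    (A : Type*) [CommRing A] [IsDedekindDomain A]
    (H : Type*) [CommRing H] [HopfAlgebra A H] [Module.Flat A H]
    (V : Type*) [AddCommGroup V] [Module A V] [Module.Flat A V]
    (ρ : V →ₗ[A] V ⊗[A] H)
    (hcoassoc :
      (TensorProduct.assoc A V H H).toLinearMap ∘ₗ (LinearMap.rTensor H ρ) ∘ₗ ρ
        = (LinearMap.lTensor V (Coalgebra.comul (R := A) (A := H))) ∘ₗ ρ)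
    (W₀ : Submodule A V) (hW₀ : W₀.FG) :
    ∃ U : Submodule A V, W₀ ≤ U ∧ U.FG ∧ Module.Projective A U ∧
      ∀ u ∈ U, ρ u ∈ LinearMap.range (LinearMap.rTensor H U.subtype) := by
  obtain ⟨L, hL, hW₀L, hρW₀⟩ := W₀.exists_fg_le_and_map_le_range_rTensor ρ hW₀
  have hU : (L.comoduleInterior ρ).FG := hL.of_le inf_le_left
  exact ⟨L.comoduleInterior ρ, le_inf hW₀L (Submodule.map_le_iff_le_comap.mp hρW₀), hU,
    Submodule.projective_of_fg hU, L.isSubcomodule_comoduleInterior hcoassoc⟩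

/-- Over a Dedekind domain `A`, let `H` be a flat commutative Hopf
`A`-algebra and `V` a flat `A`-module with a right `H`-comodule structure `ρ`.
Then every finitely generated submodule of `V` is contained in a finitely generated
projective subcomodule of `V`. -/
theorem flat_comodule_union_of_fg_projective_subcomodules
    (A : Type*) [CommRing A] [IsDomain A] [IsDedekindDomain A]
    (H : Type*) [CommRing H] [HopfAlgebra A H] [Module.Flat A H]
    (V : Type*) [AddCommGroup V] [Module A V] [Module.Flat A V]
    (ρ : V →ₗ[A] V ⊗[A] H)
    (hcounit : ∀ v : V,
      (TensorProduct.rid A V)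
        ((LinearMap.lTensor V (Coalgebra.counit (R := A) (A := H))) (ρ v)) = v)
    (hcoassoc :
      (TensorProduct.assoc A V H H).toLinearMap ∘ₗ (LinearMap.rTensor H ρ) ∘ₗ ρ
        = (LinearMap.lTensor V (Coalgebra.comul (R := A) (A := H))) ∘ₗ ρ)
    (W₀ : Submodule A V) (hW₀ : W₀.FG) :
    ∃ U : Submodule A V, W₀ ≤ U ∧ U.FG ∧ Module.Projective A U ∧
      ∀ u ∈ U, ρ u ∈ LinearMap.range (LinearMap.rTensor H U.subtype) :=
  flat_comodule_union_of_fg_projective_subcomodules_general A H V ρ hcoassoc W₀ hW₀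
end

section
/- Let A be a principal ideal domain, and let H be a commutative Hopf algebra over A that is flat as an A-module and finitely generated as an A-algebra. Then there exist an integer n ≥ 1 and a right H-comodule structure ρ : A^n → A^n ⊗[A] H (A-linear, counital, coassociative) such that, writing ρ(e_j) = Σ_{i=1}^n e_i ⊗ a_{ij} in terms of the standard basis (e_1, …, e_n) of A^n, the determinant det(a_{ij}) of the matrix (a_{ij}) ∈ Matrix(n, n, H) is a unit of H, and H is generated as an A-algebra by the matrix coefficients a_{ij} (1 ≤ i, j ≤ n) together with the inverse of det(a_{ij}). -/
/-!
Since `H` is flat over the noetherian ring `A`, every finite subset `s ⊆ H` lies in a finitely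
generated subcomodule: choose a finitely generated `N` with `Δ(s) ⊆ N ⊗ H` and take
`V = {v | Δ v ∈ N ⊗ H}`. The counit axiom gives `V ⊆ N`, and coassociativity together with
flatness gives `Δ(V) ⊆ V ⊗ H`. Applied to `1` and a finite set of algebra generators, this yields
`V`, which is free over the PID `A` because flat modules are torsion-free. Restricting `Δ` to
`V ≅ Aⁿ` gives the comodule `ρ`. Its matrix coefficients satisfy `Δ aᵢⱼ = ∑ₖ aᵢₖ ⊗ aₖⱼ` and
`ε aᵢⱼ = δᵢⱼ`, so applying the antipode entrywise gives an inverse of `a`. The counit axiom also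
writes each basis vector of `V` as `∑ᵢ ε(vᵢ) aᵢⱼ`, so the `aᵢⱼ` generate `H`.
-/

open TensorProduct LinearMap

lemma TensorProduct.rid_lTensor_rTensor {A M N H : Type*} [CommRing A] [AddCommGroup M]
    [Module A M] [AddCommGroup N] [Module A N] [AddCommGroup H] [Module A H]
    (f : M →ₗ[A] N) (φ : H →ₗ[A] A) (x : M ⊗[A] H) :
    TensorProduct.rid A N (φ.lTensor N (f.rTensor H x)) =
      f (TensorProduct.rid A M (φ.lTensor M x)) := by
  induction x using TensorProduct.induction_on with
  | zero => simp
  | tmul m h => simp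
  | add x y hx hy => simp only [map_add, hx, hy]

lemma LinearMap.exists_comp_eq_of_injective_of_range_le {A M N P : Type*} [CommRing A]
    [AddCommGroup M] [Module A M] [AddCommGroup N] [Module A N] [AddCommGroup P] [Module A P]
    {f : N →ₗ[A] P} (hf : Function.Injective f) {g : M →ₗ[A] P} (h : range g ≤ range f) :
    ∃ k : M →ₗ[A] N, f ∘ₗ k = g :=
  ⟨(LinearEquiv.ofInjective f hf).symm ∘ₗ g.codRestrict (range f) fun x => h ⟨x, rfl⟩,
    by ext x; simp⟩

lemma Coalgebra.rid_lTensor_counit_comul {A H : Type*} [CommRing A] [AddCommGroup H] [Module A H]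
    [Coalgebra A H] (x : H) :
    _root_.TensorProduct.rid A H ((counit (R := A)).lTensor H (comul x)) = x := by
  simp

namespace Submodule

variable {A H : Type*} [CommRing A] [AddCommGroup H] [Module A H] [Coalgebra A H]

def IsSubcomodule_s1 (V : Submodule A H) : Prop :=
  ∀ v ∈ V, Coalgebra.comul v ∈ range (V.subtype.rTensor H)

lemma ker_rTensor_mkQ_comp_comul_le (N : Submodule A H) :
    ker (N.mkQ.rTensor H ∘ₗ Coalgebra.comul) ≤ N := by
  intro v hv
  rw [mem_ker, comp_apply] at hv
  rw [← N.ker_mkQ, mem_ker, ← Coalgebra.rid_lTensor_counit_comul (A := A) v,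
    ← TensorProduct.rid_lTensor_rTensor, hv, map_zero, map_zero]

lemma mem_ker_rTensor_mkQ_comp_comul {N : Submodule A H} {x : H}
    (hx : Coalgebra.comul x ∈ range (N.subtype.rTensor H)) :
    x ∈ ker (N.mkQ.rTensor H ∘ₗ Coalgebra.comul) := by
  obtain ⟨y, hy⟩ := hx
  have hN : N.mkQ ∘ₗ N.subtype = 0 := by ext; simp
  rw [mem_ker, comp_apply, ← hy, ← rTensor_comp_apply, hN, rTensor_zero, LinearMap.zero_apply]

lemma isSubcomodule_ker_rTensor_mkQ_comp_comul [Module.Flat A H] (N : Submodule A H) :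
    (ker (N.mkQ.rTensor H ∘ₗ Coalgebra.comul)).IsSubcomodule_s1 := by
  set g := N.mkQ.rTensor H ∘ₗ Coalgebra.comul
  intro v hv
  -- `H` is flat, so `ker g ⊗ H` is the kernel of `g ⊗ id`.
  refine ((Module.Flat.rTensor_exact H (exact_subtype_ker_map g)) _).mp ?_
  calc g.rTensor H (Coalgebra.comul v)
      = (N.mkQ.rTensor H).rTensor H ((TensorProduct.assoc A H H H).symm
          (Coalgebra.comul.lTensor H (Coalgebra.comul v))) := by
        rw [Coalgebra.coassoc_symm_apply, ← rTensor_comp_apply]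
    _ = (TensorProduct.assoc A (H ⧸ N) H H).symm
          (N.mkQ.rTensor (H ⊗[A] H) (Coalgebra.comul.lTensor H (Coalgebra.comul v))) := by
        rw [rTensor_tensor]; simp
    _ = (TensorProduct.assoc A (H ⧸ N) H H).symm
          (Coalgebra.comul.lTensor (H ⧸ N) (g v)) := by
        rw [← comp_apply (f := N.mkQ.rTensor _), rTensor_comp_lTensor, ← lTensor_comp_rTensor]
        rfl
    _ = 0 := by rw [mem_ker.mp hv, map_zero, map_zero]

lemma exists_fg_isSubcomodule_subset [IsNoetherianRing A] [Module.Flat A H] {s : Set H}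
    (hs : s.Finite) : ∃ V : Submodule A H, V.FG ∧ s ⊆ V ∧ V.IsSubcomodule_s1 := by
  obtain ⟨N, hNfg, hN⟩ :=
    exists_fg_le_subset_range_rTensor_subtype (Coalgebra.comul (R := A) '' s) (hs.image _)
  exact ⟨_, hNfg.of_le (ker_rTensor_mkQ_comp_comul_le N),
    fun x hx => mem_ker_rTensor_mkQ_comp_comul (hN ⟨x, hx, rfl⟩),
    isSubcomodule_ker_rTensor_mkQ_comp_comul N⟩

lemma IsSubcomodule_s1.comul_mem_range_rTensor {M : Type*} [AddCommGroup M] [Module A M]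
    {V : Submodule A H} (hV : V.IsSubcomodule_s1) (e : V ≃ₗ[A] M) (x : M) :
    Coalgebra.comul (R := A) ((V.subtype ∘ₗ e.symm.toLinearMap) x) ∈
      range ((V.subtype ∘ₗ e.symm.toLinearMap).rTensor H) := by
  obtain ⟨y, hy⟩ := hV _ (e.symm x).2
  refine ⟨e.toLinearMap.rTensor H y, ?_⟩
  rw [← rTensor_comp_apply, comp_assoc, e.symm_comp, comp_id, hy]
  rfl

end Submodule

section Comodule

variable {A H M : Type*} [CommRing A] [AddCommGroup H] [Module A H] [Coalgebra A H]
  [AddCommGroup M] [Module A M]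

variable (A H) in
structure IsRightComodule (ρ : M →ₗ[A] M ⊗[A] H) : Prop where
  rid_lTensor_counit : ∀ v : M,
    (TensorProduct.rid A M) ((LinearMap.lTensor M (Coalgebra.counit (R := A) (A := H))) (ρ v)) = v
  coassoc : (TensorProduct.assoc A M H H).toLinearMap ∘ₗ (LinearMap.rTensor H ρ) ∘ₗ ρ
    = (LinearMap.lTensor M (Coalgebra.comul (R := A) (A := H))) ∘ₗ ρ

lemma IsRightComodule.of_rTensor_comp_eq [Module.Flat A H] {f : M →ₗ[A] H}
    (hf : Function.Injective f) {ρ : M →ₗ[A] M ⊗[A] H}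
    (hρ : f.rTensor H ∘ₗ ρ = Coalgebra.comul ∘ₗ f) : IsRightComodule A H ρ where
  rid_lTensor_counit v := hf <| by
    rw [← TensorProduct.rid_lTensor_rTensor, ← comp_apply (f := f.rTensor H), hρ, comp_apply,
      Coalgebra.rid_lTensor_counit_comul]
  coassoc := by
    refine (LinearMap.cancel_left
      (Module.Flat.rTensor_preserves_injective_linearMap (M := H ⊗[A] H) f hf)).mp ?_
    calc f.rTensor (H ⊗[A] H) ∘ₗ (TensorProduct.assoc A M H H).toLinearMap ∘ₗ ρ.rTensor H ∘ₗ ρ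
        = (TensorProduct.assoc A H H H).toLinearMap ∘ₗ (f.rTensor H ∘ₗ ρ).rTensor H ∘ₗ ρ := by
          rw [rTensor_tensor, rTensor_comp]; ext; simp
      _ = (TensorProduct.assoc A H H H).toLinearMap ∘ₗ Coalgebra.comul.rTensor H ∘ₗ
            Coalgebra.comul ∘ₗ f := by
          rw [hρ, rTensor_comp, comp_assoc, hρ]
      _ = Coalgebra.comul.lTensor H ∘ₗ Coalgebra.comul ∘ₗ f :=
          congr_arg (· ∘ₗ f) Coalgebra.coassoc
      _ = f.rTensor (H ⊗[A] H) ∘ₗ Coalgebra.comul.lTensor M ∘ₗ ρ := by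
          rw [← hρ, ← comp_assoc, ← comp_assoc, lTensor_comp_rTensor, rTensor_comp_lTensor]

lemma exists_isRightComodule_of_injective [Module.Flat A H] {f : M →ₗ[A] H}
    (hf : Function.Injective f) (hcomul : ∀ x, Coalgebra.comul (f x) ∈ range (f.rTensor H)) :
    ∃ ρ : M →ₗ[A] M ⊗[A] H, IsRightComodule A H ρ ∧ f.rTensor H ∘ₗ ρ = Coalgebra.comul ∘ₗ f := by
  obtain ⟨ρ, hρ⟩ := exists_comp_eq_of_injective_of_range_le
    (Module.Flat.rTensor_preserves_injective_linearMap f hf)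
    (g := Coalgebra.comul ∘ₗ f) (by rintro _ ⟨x, rfl⟩; exact hcomul x)
  exact ⟨ρ, .of_rTensor_comp_eq hf hρ, hρ⟩

end Comodule

section BasisLeft

variable {A M N P : Type*} {ι : Type*} [CommRing A] [AddCommGroup M] [Module A M]
  [AddCommGroup N] [Module A N] [AddCommGroup P] [Module A P] [DecidableEq ι]
  (b : Module.Basis ι A M)

lemma TensorProduct.equivFinsuppOfBasisLeft_lTensor (f : N →ₗ[A] P) (x : M ⊗[A] N) (i : ι) :
    equivFinsuppOfBasisLeft b (f.lTensor M x) i = f (equivFinsuppOfBasisLeft b x i) := by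
  induction x using TensorProduct.induction_on with
  | zero => simp
  | tmul m n => simp
  | add x y hx hy => simp only [map_add, Finsupp.add_apply, hx, hy]

variable [Fintype ι]

lemma TensorProduct.equivFinsuppOfBasisLeft_sum_tmul (x : ι → N) (j : ι) :
    equivFinsuppOfBasisLeft b (∑ i, b i ⊗ₜ[A] x i) j = x j := by
  simp [Finsupp.single_apply]

lemma TensorProduct.sum_tmul_equivFinsuppOfBasisLeft (x : M ⊗[A] N) :
    ∑ i, b i ⊗ₜ[A] equivFinsuppOfBasisLeft b x i = x := by
  conv_rhs => rw [← (equivFinsuppOfBasisLeft b).symm_apply_apply x]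
  rw [equivFinsuppOfBasisLeft_symm_apply, Finsupp.sum_fintype _ _ (by simp)]

end BasisLeft

section ComoduleMatrix

variable {A H M ι : Type*} [CommRing A] [AddCommGroup H] [Module A H]
  [AddCommGroup M] [Module A M] [DecidableEq ι] (b : Module.Basis ι A M)

noncomputable def comoduleMatrix (ρ : M →ₗ[A] M ⊗[A] H) : Matrix ι ι H :=
  Matrix.of fun i j => equivFinsuppOfBasisLeft b (ρ (b j)) i

lemma comoduleMatrix_apply (ρ : M →ₗ[A] M ⊗[A] H) (i j : ι) :
    comoduleMatrix b ρ i j = equivFinsuppOfBasisLeft b (ρ (b j)) i :=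
  rfl

lemma sum_tmul_comoduleMatrix [Fintype ι] (ρ : M →ₗ[A] M ⊗[A] H) (j : ι) :
    ∑ i, b i ⊗ₜ[A] comoduleMatrix b ρ i j = ρ (b j) :=
  TensorProduct.sum_tmul_equivFinsuppOfBasisLeft b _

variable [Coalgebra A H] {ρ : M →ₗ[A] M ⊗[A] H}

lemma IsRightComodule.counit_comoduleMatrix (hρ : IsRightComodule A H ρ) (i j : ι) :
    Coalgebra.counit (comoduleMatrix b ρ i j) = (1 : Matrix ι ι A) i j := by
  have hcounit : (Coalgebra.counit (R := A)).lTensor M (ρ (b j)) = b j ⊗ₜ[A] (1 : A) := by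
    rw [← (TensorProduct.rid A M).injective.eq_iff, hρ.rid_lTensor_counit, rid_tmul, one_smul]
  rw [comoduleMatrix_apply, ← equivFinsuppOfBasisLeft_lTensor, hcounit,
    equivFinsuppOfBasisLeft_apply_tmul_apply, b.repr_self, Matrix.one_apply,
    Finsupp.single_apply]
  simp [eq_comm]

lemma IsRightComodule.comul_comoduleMatrix [Fintype ι] (hρ : IsRightComodule A H ρ) (i j : ι) :
    Coalgebra.comul (comoduleMatrix b ρ i j) =
      ∑ k, comoduleMatrix b ρ i k ⊗ₜ[A] comoduleMatrix b ρ k j := by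
  have hexpand : (TensorProduct.assoc A M H H) (ρ.rTensor H (ρ (b j))) =
      ∑ l, b l ⊗ₜ[A] ∑ k, comoduleMatrix b ρ l k ⊗ₜ[A] comoduleMatrix b ρ k j := by
    simp only [← sum_tmul_comoduleMatrix b ρ, map_sum, rTensor_tmul, sum_tmul,
      TensorProduct.assoc_tmul, tmul_sum]
    exact Finset.sum_comm
  rw [comoduleMatrix_apply, ← equivFinsuppOfBasisLeft_lTensor, ← comp_apply,
    ← hρ.coassoc, comp_apply, comp_apply, LinearEquiv.coe_coe, hexpand,
    equivFinsuppOfBasisLeft_sum_tmul]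

end ComoduleMatrix

lemma range_le_span_comoduleMatrix {A H M ι : Type*} [CommRing A] [AddCommGroup H] [Module A H]
    [Coalgebra A H] [AddCommGroup M] [Module A M] [Fintype ι] [DecidableEq ι]
    (b : Module.Basis ι A M) {f : M →ₗ[A] H} {ρ : M →ₗ[A] M ⊗[A] H}
    (hρ : f.rTensor H ∘ₗ ρ = Coalgebra.comul ∘ₗ f) :
    range f ≤ Submodule.span A (Set.range fun p : ι × ι => comoduleMatrix b ρ p.1 p.2) := by
  have hbasis (j : ι) :
      f (b j) = ∑ i, Coalgebra.counit (R := A) (f (b i)) • comoduleMatrix b ρ i j := by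
    have h := congr_arg (fun x => TensorProduct.lid A H ((Coalgebra.counit (R := A)).rTensor H x))
      (LinearMap.congr_fun hρ (b j))
    simpa [← sum_tmul_comoduleMatrix b ρ j, Coalgebra.rTensor_counit_comul] using h.symm
  rw [range_eq_map, ← b.span_eq, Submodule.map_span, Submodule.span_le]
  rintro _ ⟨_, ⟨j, rfl⟩, rfl⟩
  rw [hbasis]
  exact Submodule.sum_mem _ fun i _ => Submodule.smul_mem _ _ (Submodule.subset_span ⟨(i, j), rfl⟩)

lemma Matrix.mul_map_antipode_eq_one {A H ι : Type*} [CommRing A] [Ring H] [HopfAlgebra A H]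
    [Fintype ι] [DecidableEq ι] {a : Matrix ι ι H}
    (hcomul : ∀ i j, Coalgebra.comul (R := A) (a i j) = ∑ k, a i k ⊗ₜ[A] a k j)
    (hcounit : ∀ i j, Coalgebra.counit (R := A) (a i j) = (1 : Matrix ι ι A) i j) :
    a * a.map (HopfAlgebra.antipode A) = 1 := by
  ext i j
  have h := HopfAlgebra.mul_antipode_lTensor_comul_apply (R := A) (a i j)
  simp only [hcomul, hcounit, map_sum, lTensor_tmul, mul'_apply] at h
  simpa [Matrix.mul_apply, Matrix.one_apply, apply_ite (algebraMap A H)] using h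

/-- Over a PID `A`, a flat commutative Hopf `A`-algebra `H` of finite type
admits a faithful finite free comodule: there are `n ≥ 1` and a right `H`-comodule structure
`ρ` on `A^n` such that, writing `ρ (e j) = ∑ i, e i ⊗ a i j`, the determinant of the matrix
`a` is a unit of `H`, and `H` is generated as an `A`-algebra by the matrix coefficients
`a i j` together with the inverse of `det a`. -/
theorem exists_closed_embedding_into_GL
    (A : Type*) [CommRing A] [IsDomain A] [IsPrincipalIdealRing A]
    (H : Type*) [CommRing H] [HopfAlgebra A H] [Module.Flat A H]
    (hfg : Algebra.FiniteType A H) :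
    ∃ (n : ℕ) (_ : 1 ≤ n) (ρ : (Fin n → A) →ₗ[A] (Fin n → A) ⊗[A] H)
      (a : Matrix (Fin n) (Fin n) H) (d : H),
      (∀ v : Fin n → A,
        (TensorProduct.rid A (Fin n → A))
          ((LinearMap.lTensor (Fin n → A) (Coalgebra.counit (R := A) (A := H))) (ρ v)) = v) ∧
      ((TensorProduct.assoc A (Fin n → A) H H).toLinearMap ∘ₗ (LinearMap.rTensor H ρ) ∘ₗ ρ
        = (LinearMap.lTensor (Fin n → A) (Coalgebra.comul (R := A) (A := H))) ∘ₗ ρ) ∧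
      (∀ j : Fin n, ρ (Pi.single j 1) = ∑ i : Fin n, Pi.single i (1 : A) ⊗ₜ[A] a i j) ∧
      IsUnit a.det ∧
      a.det * d = 1 ∧
      Algebra.adjoin A ((Set.range fun p : Fin n × Fin n => a p.1 p.2) ∪ {d}) = ⊤ := by
  obtain ⟨s, hs⟩ := hfg.out
  obtain ⟨V, hVfg, hsV, hV⟩ :=
    Submodule.exists_fg_isSubcomodule_subset (A := A) (s := insert 1 (s : Set H)) (Set.toFinite _)
  have : Module.Finite A V := Module.Finite.iff_fg.mpr hVfg
  set n := Module.finrank A V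
  let e := (Module.finBasis A V).equivFun
  let f : (Fin n → A) →ₗ[A] H := V.subtype ∘ₗ e.symm.toLinearMap
  have hf : Function.Injective f := V.injective_subtype.comp e.symm.injective
  have hfV : range f = V := by
    rw [range_comp_of_range_eq_top _ (LinearEquiv.range _), Submodule.range_subtype]
  obtain ⟨ρ, hρ, hfρ⟩ := exists_isRightComodule_of_injective hf (hV.comul_mem_range_rTensor e)
  set a := comoduleMatrix (Pi.basisFun A (Fin n)) ρ
  have hdet : a.det * (a.map (HopfAlgebra.antipode A)).det = 1 := by
    rw [← Matrix.det_mul, Matrix.mul_map_antipode_eq_one (hρ.comul_comoduleMatrix _)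
      (hρ.counit_comoduleMatrix _), Matrix.det_one]
  refine ⟨n, ?_, ρ, a, _, hρ.rid_lTensor_counit, hρ.coassoc,
    fun j => by simpa using (sum_tmul_comoduleMatrix (Pi.basisFun A (Fin n)) ρ j).symm,
    IsUnit.of_mul_eq_one _ hdet, hdet, ?_⟩
  · have : Nontrivial H := Bialgebra.nontrivial A
    have : Nontrivial V := ⟨⟨1, hsV (Set.mem_insert _ _)⟩, 0, by simp [Subtype.ext_iff]⟩
    exact Module.finrank_pos
  · rw [eq_top_iff, ← hs, Algebra.adjoin_le_iff]
    intro x hx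
    have hxspan := range_le_span_comoduleMatrix (Pi.basisFun A (Fin n)) hfρ
      (hfV ▸ hsV (Set.mem_insert_of_mem _ hx))
    exact Algebra.adjoin_mono Set.subset_union_left (Algebra.span_le_adjoin A _ hxspan)
end

section
/- Let A be a Dedekind domain, let H be a commutative Hopf algebra over A that is flat as an A-module, and let W be a finite free A-module equipped with a right H-comodule structure ρ : W → W ⊗[A] H (A-linear, counital, coassociative). Let U' ⊆ W be a subcomodule, i.e. an A-submodule such that ρ maps U' into the image of U' ⊗[A] H → W ⊗[A] H. Define the saturation U = { w ∈ W : a • w ∈ U' for some nonzero a ∈ A } (equivalently, U = (U' ⊗ K) ∩ W inside W ⊗ K, where K is the fraction field of A). Then U is a direct summand of W, and U is a subcomodule of W: ρ maps U into the image of U ⊗[A] H → W ⊗[A] H. -/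
/-!
The quotient `W ⧸ U` by the saturation is torsion-free, hence flat over the Dedekind domain `A`,
hence projective because it is finitely presented; so `W → W ⧸ U` splits and `U` has a complement.
For the comodule property, right exactness identifies the image of `U ⊗ H` with the kernel of
`W ⊗ H → (W ⧸ U) ⊗ H`. If `a • u ∈ U'` with `a ≠ 0`, then `a • ρ u` lies in that kernel, and
multiplication by `a` stays injective on `(W ⧸ U) ⊗ H` because `H` is flat; so `ρ u` lies in it too.
-/

open TensorProduct Module LinearMap

namespace Submodule

variable {R M : Type*}

theorem exists_isCompl_of_projective_quotient [Ring R] [AddCommGroup M] [Module R M]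
    (N : Submodule R M) [Projective R (M ⧸ N)] : ∃ N' : Submodule R M, IsCompl N N' := by
  obtain ⟨s, hs⟩ := N.mkQ.exists_rightInverse_of_surjective N.range_mkQ
  have hidem : IsIdempotentElem (s ∘ₗ N.mkQ) := by
    rw [IsIdempotentElem, End.mul_eq_comp, comp_assoc, ← comp_assoc N.mkQ, hs, id_comp]
  have hker : ker (s ∘ₗ N.mkQ) = N := by
    rw [ker_comp_of_ker_eq_bot _ (ker_eq_bot_of_inverse hs), ker_mkQ]
  exact ⟨_, hker ▸ hidem.isCompl.symm⟩

variable [CommRing R] [AddCommGroup M] [Module R M]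

theorem isTorsionFree_quotient [IsDomain R] {N : Submodule R M}
    (hN : ∀ a : R, a ≠ 0 → ∀ m : M, a • m ∈ N → m ∈ N) : IsTorsionFree R (M ⧸ N) :=
  .of_smul_eq_zero fun a x hax => by
    induction x using Quotient.induction_on with
    | H m =>
      rw [← Quotient.mk_smul, Quotient.mk_eq_zero] at hax
      rw [or_iff_not_imp_left, Quotient.mk_eq_zero]
      exact fun ha => hN a ha m hax

variable {N : Type*} [AddCommGroup N] [Module R N]

theorem range_rTensor_subtype_mono {P Q : Submodule R M} (hPQ : P ≤ Q) :
    range (rTensor N P.subtype) ≤ range (rTensor N Q.subtype) := by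
  rw [← subtype_comp_inclusion P Q hPQ, rTensor_comp]
  exact range_comp_le_range _ _

theorem mem_range_rTensor_subtype_of_smul_mem [Flat R N] {P : Submodule R M} {a : R}
    (ha : IsSMulRegular (M ⧸ P) a) {x : M ⊗[R] N} (hx : a • x ∈ range (rTensor N P.subtype)) :
    x ∈ range (rTensor N P.subtype) := by
  have hexact := rTensor_exact N (exact_subtype_mkQ P) P.mkQ_surjective
  rw [← hexact.linearMap_ker_eq, mem_ker] at hx ⊢
  rw [map_smul] at hx
  exact (ha.rTensor N) (by simpa only [smul_zero] using hx)

end Submodule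

theorem IsDedekindDomain.projective_of_isTorsionFree (R M : Type*) [CommRing R]
    [IsDedekindDomain R] [AddCommGroup M] [Module R M] [Module.Finite R M] [IsTorsionFree R M] :
    Projective R M :=
  have := finitePresentation_of_finite R M
  Flat.projective_of_finitePresentation

theorem saturation_isCompl_and_subcomodule_general
    (A : Type*) [CommRing A] [IsDedekindDomain A]
    (H : Type*) [CommRing H] [HopfAlgebra A H] [Module.Flat A H]
    (W : Type*) [AddCommGroup W] [Module A W] [Module.Finite A W]
    (ρ : W →ₗ[A] W ⊗[A] H)
    (U' : Submodule A W)
    (hU' : ∀ u ∈ U', ρ u ∈ LinearMap.range (LinearMap.rTensor H U'.subtype))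
    (U : Submodule A W)
    (hU : ∀ w : W, w ∈ U ↔ ∃ a : A, a ≠ 0 ∧ a • w ∈ U') :
    (∃ U'' : Submodule A W, IsCompl U U'') ∧
      ∀ u ∈ U, ρ u ∈ LinearMap.range (LinearMap.rTensor H U.subtype) := by
  have hle : U' ≤ U := fun w hw => (hU w).2 ⟨1, one_ne_zero, by rwa [one_smul]⟩
  have hsaturated : ∀ a : A, a ≠ 0 → ∀ w : W, a • w ∈ U → w ∈ U := fun a ha w haw => by
    obtain ⟨b, hb, hbaw⟩ := (hU _).1 haw
    exact (hU w).2 ⟨b * a, mul_ne_zero hb ha, by rwa [mul_smul]⟩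
  have := Submodule.isTorsionFree_quotient hsaturated
  have := IsDedekindDomain.projective_of_isTorsionFree A (W ⧸ U)
  refine ⟨U.exists_isCompl_of_projective_quotient, fun u hu => ?_⟩
  obtain ⟨a, ha, hau⟩ := (hU u).1 hu
  refine Submodule.mem_range_rTensor_subtype_of_smul_mem (IsSMulRegular.of_ne_zero ha) ?_
  rw [← map_smul]
  exact Submodule.range_rTensor_subtype_mono hle (hU' _ hau)

/-- saturation lemma.  Over a Dedekind domain `A`, let `H` be a flat
commutative Hopf `A`-algebra and `W` a finite free `A`-module with a right `H`-comodule
structure `ρ`.  If `U' ⊆ W` is a subcomodule and `U` is its saturation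
`{ w ∈ W : a • w ∈ U' for some a ≠ 0 }`, then `U` is a direct summand of `W` and is
again a subcomodule. -/
theorem saturation_isCompl_and_subcomodule
    (A : Type*) [CommRing A] [IsDomain A] [IsDedekindDomain A]
    (H : Type*) [CommRing H] [HopfAlgebra A H] [Module.Flat A H]
    (W : Type*) [AddCommGroup W] [Module A W] [Module.Free A W] [Module.Finite A W]
    (ρ : W →ₗ[A] W ⊗[A] H)
    (hcounit : ∀ w : W,
      (TensorProduct.rid A W)
        ((LinearMap.lTensor W (Coalgebra.counit (R := A) (A := H))) (ρ w)) = w)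
    (hcoassoc :
      (TensorProduct.assoc A W H H).toLinearMap ∘ₗ (LinearMap.rTensor H ρ) ∘ₗ ρ
        = (LinearMap.lTensor W (Coalgebra.comul (R := A) (A := H))) ∘ₗ ρ)
    (U' : Submodule A W)
    (hU' : ∀ u ∈ U', ρ u ∈ LinearMap.range (LinearMap.rTensor H U'.subtype))
    (U : Submodule A W)
    (hU : ∀ w : W, w ∈ U ↔ ∃ a : A, a ≠ 0 ∧ a • w ∈ U') :
    (∃ U'' : Submodule A W, IsCompl U U'') ∧
      ∀ u ∈ U, ρ u ∈ LinearMap.range (LinearMap.rTensor H U.subtype) :=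
  saturation_isCompl_and_subcomodule_general A H W ρ U' hU' U hU
end

section
/- Let k be an algebraically closed field and let H be a commutative Hopf algebra over k that is finitely generated as a k-algebra and whose prime spectrum is an irreducible topological space (equivalently, the nilradical of H is a prime ideal). Then the set of associated primes of H, regarded as a module over itself, is exactly { nilradical of H }; in particular, H has no embedded associated primes. -/
/-!
Let `p` be the nilradical, a prime, and `K` the ideal of elements killed by something outside `p`.
If `K = 0`, then `0` is `p`-primary and `p` is the only associated prime. Otherwise the annihilator
`I` of `K` is proper, and not contained in `p` because `K` is finitely generated; like `K`, it is
preserved by every ring automorphism. But translations by `k`-points are algebra automorphisms of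
`H` acting transitively on the maximal ideals (all `k`-points by the Nullstellensatz), so `I`,
lying in one maximal ideal, lies in all of them, hence in the Jacobson radical, which is `p`.
-/

open WithConv

namespace Bialgebra

variable {R C : Type*} [CommSemiring R] [CommSemiring C] [Bialgebra R C]

/-- The comorphism `c ↦ ∑ χ(c₁) c₂` of left translation by the point `χ`. -/
noncomputable def leftTranslation (χ : WithConv (C →ₐ[R] R)) : C →ₐ[R] C :=
  ofConv (toConv ((Algebra.ofId R C).comp χ.ofConv) * toConv (AlgHom.id R C))

lemma leftTranslation_one : leftTranslation (1 : WithConv (C →ₐ[R] R)) = AlgHom.id R C := by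
  have : (Algebra.ofId R C).comp (ofConv (1 : WithConv (C →ₐ[R] R))) =
      ofConv (1 : WithConv (C →ₐ[R] C)) := by
    ext; simp
  rw [leftTranslation, this, toConv_ofConv, one_mul, ofConv_toConv]

lemma leftTranslation_mul (χ ψ : WithConv (C →ₐ[R] R)) :
    leftTranslation (χ * ψ) = (leftTranslation ψ).comp (leftTranslation χ) := by
  have hι : (leftTranslation ψ).comp (Algebra.ofId R C) = Algebra.ofId R C :=
    Subsingleton.elim _ _
  calc leftTranslation (χ * ψ)
      = ofConv (toConv ((Algebra.ofId R C).comp χ.ofConv) * toConv (leftTranslation ψ)) := by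
        rw [leftTranslation, AlgHom.comp_convMul_distrib, toConv_ofConv, mul_assoc]; rfl
    _ = (leftTranslation ψ).comp (leftTranslation χ) := by
        rw [leftTranslation.eq_1 χ, AlgHom.comp_convMul_distrib, ← AlgHom.comp_assoc, hι,
          AlgHom.comp_id]

lemma comp_leftTranslation (φ : C →ₐ[R] R) (χ : WithConv (C →ₐ[R] R)) :
    φ.comp (leftTranslation χ) = ofConv (χ * toConv φ) := by
  rw [leftTranslation, AlgHom.comp_convMul_distrib, ← AlgHom.comp_assoc,
    Subsingleton.elim (φ.comp (Algebra.ofId R C)) (AlgHom.id R R)]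
  rfl

end Bialgebra

namespace HopfAlgebra

variable {R C : Type*} [CommSemiring R] [CommSemiring C] [HopfAlgebra R C]

open Bialgebra

noncomputable def leftTranslationEquiv (χ : WithConv (C →ₐ[R] R)) : C ≃ₐ[R] C :=
  AlgEquiv.ofAlgHom (leftTranslation χ) (leftTranslation χ⁻¹)
    (by rw [← leftTranslation_mul, inv_mul_cancel, leftTranslation_one])
    (by rw [← leftTranslation_mul, mul_inv_cancel, leftTranslation_one])

lemma exists_algEquiv_comp_eq (χ₀ χ₁ : C →ₐ[R] R) :
    ∃ σ : C ≃ₐ[R] C, χ₁.comp (σ : C →ₐ[R] C) = χ₀ :=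
  ⟨leftTranslationEquiv (toConv χ₀ * (toConv χ₁)⁻¹), by
    rw [leftTranslationEquiv, AlgEquiv.toAlgHom_ofAlgHom, comp_leftTranslation,
      inv_mul_cancel_right]⟩

end HopfAlgebra

lemma Ideal.exists_algHom_ker_eq_of_isMaximal {k A : Type*} [Field k] [IsAlgClosed k]
    [CommRing A] [Algebra k A] [Algebra.FiniteType k A] (m : Ideal A) [m.IsMaximal] :
    ∃ χ : A →ₐ[k] k, RingHom.ker χ = m := by
  let := Ideal.Quotient.field m
  have : Module.Finite k (A ⧸ m) := finite_of_finite_type_of_isJacobsonRing k (A ⧸ m)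
  let e : k ≃ₐ[k] A ⧸ m :=
    AlgEquiv.ofBijective (Algebra.ofId k _) IsAlgClosed.algebraMap_bijective_of_isIntegral
  refine ⟨(e.symm : A ⧸ m →ₐ[k] k).comp (Ideal.Quotient.mkₐ k m), ?_⟩
  ext x
  simp [Ideal.Quotient.eq_zero_iff_mem]

lemma Ideal.le_jacobson_bot_of_map_mem_of_transitive {R : Type*} [CommRing R] {I : Ideal R}
    (hI : I ≠ ⊤)
    (htrans : ∀ m₀ m₁ : Ideal R, m₀.IsMaximal → m₁.IsMaximal →
      ∃ σ : R ≃+* R, m₁.comap (σ : R →+* R) = m₀)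
    (hinv : ∀ σ : R ≃+* R, ∀ x ∈ I, σ x ∈ I) : I ≤ (⊥ : Ideal R).jacobson := by
  obtain ⟨m₀, hm₀, hIm₀⟩ := I.exists_le_maximal hI
  refine le_sInf fun m₁ ⟨_, hm₁⟩ x hx => ?_
  obtain ⟨σ, hσ⟩ := htrans m₀ m₁ hm₀ hm₁
  have : σ.symm x ∈ m₁.comap (σ : R →+* R) := hσ ▸ hIm₀ (hinv σ.symm x hx)
  simpa using Ideal.mem_comap.1 this

section Torsion

variable {R : Type*} [CommRing R]

lemma Submodule.map_mem_annihilator {I : Ideal R} (hI : ∀ σ : R ≃+* R, ∀ x ∈ I, σ x ∈ I)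
    (σ : R ≃+* R) {a : R} (ha : a ∈ I.annihilator) : σ a ∈ I.annihilator := by
  rw [Submodule.mem_annihilator] at ha ⊢
  intro y hy
  simpa using congrArg σ (ha _ (hI σ.symm y hy))

lemma annihilator_torsion'_primeCompl_not_le [IsNoetherianRing R] (p : Ideal R) [p.IsPrime] :
    ¬ (Submodule.torsion' R R p.primeCompl).annihilator ≤ p := by
  have : (⟨p, ‹_›⟩ : PrimeSpectrum R) ∉
      Module.support R (Submodule.torsion' R R p.primeCompl) :=
    Module.notMem_support_iff'.2 fun ⟨_, ⟨⟨s, hs⟩, hsx⟩⟩ => ⟨s, hs, Subtype.ext hsx⟩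
  rwa [Module.support_eq_zeroLocus] at this

variable [(nilradical R).IsPrime]

lemma map_mem_torsion'_primeCompl_nilradical (σ : R ≃+* R) {x : R}
    (hx : x ∈ Submodule.torsion' R R (nilradical R).primeCompl) :
    σ x ∈ Submodule.torsion' R R (nilradical R).primeCompl := by
  obtain ⟨⟨s, hs⟩, hsx⟩ := hx
  refine ⟨⟨σ s, fun hσs => hs ?_⟩, by simpa [Submonoid.smul_def] using congrArg σ hsx⟩
  simpa [mem_nilradical] using (mem_nilradical.1 hσs).map σ.symm

lemma isPrimary_bot_of_torsion'_primeCompl_nilradical_eq_bot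
    (h : Submodule.torsion' R R (nilradical R).primeCompl = ⊥) : (⊥ : Ideal R).IsPrimary := by
  have hbot : (⊥ : Ideal R) ≠ ⊤ := fun h =>
    Ideal.IsPrime.ne_top ‹_› (eq_top_iff.2 (h ▸ bot_le))
  refine Ideal.isPrimary_iff.2 ⟨hbot, fun {x y} hxy => or_iff_not_imp_right.2 fun hy => ?_⟩
  have : x ∈ Submodule.torsion' R R (nilradical R).primeCompl :=
    ⟨⟨y, hy⟩, by simpa [Submonoid.smul_def, mul_comm] using hxy⟩
  rwa [h] at this

end Torsion

theorem associatedPrimes_self_eq_singleton_nilradical {R : Type*} [CommRing R]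
    [IsNoetherianRing R] [(nilradical R).IsPrime]
    (h : ∀ I : Ideal R, I ≠ ⊤ → (∀ σ : R ≃+* R, ∀ x ∈ I, σ x ∈ I) → I ≤ nilradical R) :
    associatedPrimes R R = {nilradical R} := by
  by_cases hK : Submodule.torsion' R R (nilradical R).primeCompl = ⊥
  · rw [← LinearEquiv.AssociatedPrimes.eq (Submodule.quotEquivOfEqBot (⊥ : Ideal R) rfl),
      associatedPrimes.eq_singleton_of_isPrimary
        (isPrimary_bot_of_torsion'_primeCompl_nilradical_eq_bot hK)]
    rfl
  · refine absurd (h _ (mt Submodule.annihilator_eq_top_iff.1 hK) ?_)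
      (annihilator_torsion'_primeCompl_not_le _)
    exact Submodule.map_mem_annihilator fun σ _ => map_mem_torsion'_primeCompl_nilradical σ

/-- Let `k` be an algebraically closed field and `H` a commutative Hopf
algebra over `k` of finite type whose prime spectrum is irreducible.  Then the set of
associated primes of `H` (as a module over itself) is exactly `{nilradical H}`;
in particular `H` has no embedded associated primes. -/
theorem associatedPrimes_eq_nilradical_of_irreducible_hopfAlgebra
    (k : Type*) [Field k] [IsAlgClosed k]
    (H : Type*) [CommRing H] [HopfAlgebra k H]
    (hfg : Algebra.FiniteType k H)
    (hirr : IrreducibleSpace (PrimeSpectrum H)) :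
    associatedPrimes H H = {nilradical H} := by
  have := Algebra.FiniteType.isNoetherianRing k H
  have := isJacobsonRing_of_finiteType (A := k) (B := H)
  have := PrimeSpectrum.irreducibleSpace_iff_isPrime_nilradical.1 hirr
  refine associatedPrimes_self_eq_singleton_nilradical fun I hI hinv => ?_
  rw [nilradical, Ideal.zero_eq_bot, Ideal.radical_eq_jacobson]
  refine Ideal.le_jacobson_bot_of_map_mem_of_transitive hI (fun m₀ m₁ _ _ => ?_) hinv
  obtain ⟨χ₀, rfl⟩ := Ideal.exists_algHom_ker_eq_of_isMaximal (k := k) m₀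
  obtain ⟨χ₁, rfl⟩ := Ideal.exists_algHom_ker_eq_of_isMaximal (k := k) m₁
  obtain ⟨σ, hσ⟩ := HopfAlgebra.exists_algEquiv_comp_eq χ₀ χ₁
  exact ⟨σ.toRingEquiv, by rw [← hσ]; rfl⟩
end

section
/- Let A be a Dedekind domain with fraction field K, and let B be a commutative A-algebra that is flat as an A-module and finitely generated as an A-algebra. If the prime spectrum of B ⊗[A] K is an irreducible topological space, then the prime spectrum of B is an irreducible topological space (equivalently, the nilradical of B is a prime ideal). -/
/-!
Since `B` is flat over `A` and `A → K` is injective, so is `B → B ⊗[A] K`. Hence the image of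
`Spec (B ⊗[A] K)` is dense in `Spec B`, and the closure of an irreducible set is irreducible.
-/

open TensorProduct

theorem DenseRange.irreducibleSpace {X Y : Type*} [TopologicalSpace X] [TopologicalSpace Y]
    [IrreducibleSpace X] {f : X → Y} (hfc : Continuous f) (hf : DenseRange f) :
    IrreducibleSpace Y := by
  rw [irreducibleSpace_def, Set.top_eq_univ, ← hf.closure_range, ← Set.image_univ]
  exact ((IrreducibleSpace.isIrreducible_univ X).image f hfc.continuousOn).closure

theorem PrimeSpectrum.irreducibleSpace_of_ker_le_nilradical {R S : Type*} [CommSemiring R]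
    [CommSemiring S] [IrreducibleSpace (PrimeSpectrum S)] (f : R →+* S)
    (hf : RingHom.ker f ≤ nilradical R) : IrreducibleSpace (PrimeSpectrum R) :=
  ((denseRange_comap_iff_ker_le_nilRadical f).mpr hf).irreducibleSpace (continuous_comap f)

theorem irreducibleSpace_of_irreducibleSpace_genericFiber_general
    (A : Type*) [CommRing A]
    (B : Type*) [CommRing B] [Algebra A B] [Module.Flat A B]
    (h : IrreducibleSpace (PrimeSpectrum (B ⊗[A] FractionRing A))) :
    IrreducibleSpace (PrimeSpectrum B) := by
  have hinj : Function.Injective (algebraMap B (B ⊗[A] FractionRing A)) :=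
    Algebra.TensorProduct.includeLeft_injective (S := B)
      (IsFractionRing.injective A (FractionRing A))
  exact PrimeSpectrum.irreducibleSpace_of_ker_le_nilradical _
    ((RingHom.injective_iff_ker_eq_bot _).mp hinj ▸ bot_le)

/-- Let `A` be a Dedekind domain with fraction field `K`, and let `B` be a
flat, finite-type commutative `A`-algebra.  If the prime spectrum of `B ⊗[A] K` is
irreducible, then so is the prime spectrum of `B`. -/
theorem irreducibleSpace_of_irreducibleSpace_genericFiber
    (A : Type*) [CommRing A] [IsDomain A] [IsDedekindDomain A]
    (B : Type*) [CommRing B] [Algebra A B] [Module.Flat A B]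
    (hfg : Algebra.FiniteType A B)
    (h : IrreducibleSpace (PrimeSpectrum (B ⊗[A] FractionRing A))) :
    IrreducibleSpace (PrimeSpectrum B) :=
  irreducibleSpace_of_irreducibleSpace_genericFiber_general A B h
end
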